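/- Let v ∈ F₃ and let (Tₙ)ₙ be the associated sequence of subsets of ℤ³. Then for every n ∈ ℕ and every x ∈ Tₙ one has 0 ≤ ⟨x,v⟩ < Σ_{i=0}^{n} v₁⁽ⁱ⁾; consequently ∪_{n=0}^∞ Tₙ ⊆ P(v, Ω(v)). -/

import Mathlib

open Matrix
open scoped Classical

noncomputable section

abbrev Z3 := Fin 3 → ℤ
abbrev R3 := Fin 3 → ℝ

/-- The inner product `⟨x, v⟩` of an integer vector with a real vector. -/
def dot3 (x : Z3) (v : R3) : ℝ := ∑ i, (x i : ℝ) * v i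

/-- Two points of `ℤ³` are 2-adjacent if `‖x − y‖₁ = 1`. -/
def adj3 (x y : Z3) : Prop := (∑ i, |x i - y i|) = 1

/-- A subset of `ℤ³` is 2-connected if it is nonempty and any two of its points are
joined by a finite chain of points of the set with consecutive points 2-adjacent. -/
def Connected3 (A : Set Z3) : Prop :=
  A.Nonempty ∧ ∀ x ∈ A, ∀ y ∈ A,
    Relation.ReflTransGen (fun a b => b ∈ A ∧ adj3 a b) x y

/-- The arithmetical discrete plane `P(v, ω)`. -/
def Plane (v : R3) (ω : ℝ) : Set Z3 := {x | 0 ≤ dot3 x v ∧ dot3 x v < ω}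

/-- The connecting thickness `Ω(v)`. -/
def omegaConn (v : R3) : ℝ := sInf {ω : ℝ | 0 ≤ ω ∧ Connected3 (Plane v ω)}

/-- `O₃⁺ = {v : 0 ≤ v₁ ≤ v₂ ≤ v₃}`. -/
def O3 : Set R3 := {v | 0 ≤ v 0 ∧ v 0 ≤ v 1 ∧ v 1 ≤ v 2}

/-- The ordered fully subtractive map. -/
def FS (v : R3) : R3 :=
  if v 0 ≤ v 1 - v 0 ∧ v 1 - v 0 ≤ v 2 - v 0 then ![v 0, v 1 - v 0, v 2 - v 0]
  else if v 1 - v 0 < v 0 ∧ v 0 ≤ v 2 - v 0 then ![v 1 - v 0, v 0, v 2 - v 0]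
  else ![v 1 - v 0, v 2 - v 0, v 0]

/-- `F₃ = {v ∈ O₃⁺ : v₁⁽ⁿ⁾ + v₂⁽ⁿ⁾ > v₃⁽ⁿ⁾ for all n}`. -/
def F3set : Set R3 :=
  {v | v ∈ O3 ∧ ∀ n : ℕ, (FS^[n] v) 2 < (FS^[n] v) 0 + (FS^[n] v) 1}

/-- Branch index of `F` at `v`: values `0, 1, 2` encode the branches labelled `1, 2, 3`. -/
def FSidx (v : R3) : Fin 3 :=
  if v 0 ≤ v 1 - v 0 ∧ v 1 - v 0 ≤ v 2 - v 0 then 0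
  else if v 1 - v 0 < v 0 ∧ v 0 ≤ v 2 - v 0 then 1
  else 2

/-- The matrices `M₁, M₂, M₃` of the fully subtractive algorithm. -/
def Mmat : Fin 3 → Matrix (Fin 3) (Fin 3) ℤ :=
  ![!![1,0,0; 1,1,0; 1,0,1], !![0,1,0; 1,1,0; 0,1,1], !![0,0,1; 1,0,1; 0,1,1]]

def e1 : Z3 := ![1,0,0]

/-- The product `M₁ ⋯ Mₙ` of the matrices associated with the F-expansion of `v`. -/
def prodM (v : R3) (n : ℕ) : Matrix (Fin 3) (Fin 3) ℤ :=
  ((List.range n).map (fun j => Mmat (FSidx (FS^[j] v)))).prod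

/-- The translation vector `((M₁⋯Mₙ)ᵀ)⁻¹ · e₁`. -/
def transVec (v : R3) (n : ℕ) : Z3 := ((prodM v n)ᵀ)⁻¹ *ᵥ e1

/-- The sequence `Tₙ` of subsets of `ℤ³`: `T₀ = {0}`, `T_{n+1} = Tₙ ∪ (Tₙ + ((M₁⋯Mₙ)ᵀ)⁻¹·e₁)`
(so that `T₁ = {0, e₁}`, the empty matrix product being the identity). -/
def Tseq (v : R3) : ℕ → Set Z3
  | 0 => {0}
  | n + 1 => Tseq v n ∪ ((fun x => x + transVec v n) '' Tseq v n)

/-! The vector `transVec v n` has height `⟨transVec v n, v⟩ = v₁⁽ⁿ⁾`, since `v = (M₁⋯Mₙ) v⁽ⁿ⁾`;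
so the heights of the points of `Tₙ` lie in `[0, Σ_{i<n} v₁⁽ⁱ⁾]`.

For the bound by `Ω(v)` one shows: if `P(w, ω)` is 2-connected and `w ∈ F₃`, then `w₁ < ω` and
`P(F w, ω - w₁)` is 2-connected. For the first claim, some nonzero point of height below `ω`
exists because the `w₁⁽ⁿ⁾` are positive and summable, and the first step of a path from `0` to
it has height `±wᵢ`. For the second, write `w = M (F w)` with `M = M_k`: the map `x ↦ Mᵀx`
preserves heights and turns unit steps into steps `e_k` or `e_k + e_c` (the rows of `M`), and
folding the slice of heights in `[ω - w₁, ω)` down by `e_k` (note `(F w)_k = w₁`) turns these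
into unit-step paths of `P(F w, ω - w₁)`. Iterating gives `Σ_{i<m} v₁⁽ⁱ⁾ < ω` for every
connecting thickness `ω`, and `P(v, ‖v‖₁)` is 2-connected, so the infimum `Ω(v)` bounds all
the partial sums.
-/

lemma dot3_zero (v : R3) : dot3 0 v = 0 := by simp [dot3]

lemma dot3_add (x y : Z3) (v : R3) : dot3 (x + y) v = dot3 x v + dot3 y v := by
  simp only [dot3, Pi.add_apply, Int.cast_add, add_mul, Finset.sum_add_distrib]

lemma dot3_single (i : Fin 3) (c : ℤ) (v : R3) : dot3 (Pi.single i c) v = c * v i := by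
  simp [dot3, Pi.single_apply]

lemma dot3_single_one (i : Fin 3) (v : R3) : dot3 (Pi.single i 1) v = v i := by
  rw [dot3_single, Int.cast_one, one_mul]

lemma dot3_e1 (v : R3) : dot3 e1 v = v 0 := by
  simp [dot3, e1, Fin.sum_univ_three]

lemma dot3_transpose_mulVec (A : Matrix (Fin 3) (Fin 3) ℤ) (x : Z3) (u : R3) :
    dot3 (Aᵀ *ᵥ x) u = dot3 x (A.map (Int.cast : ℤ → ℝ) *ᵥ u) := by
  have hcast : (Int.cast ∘ (Aᵀ *ᵥ x) : R3) = (A.map (Int.cast : ℤ → ℝ))ᵀ *ᵥ (Int.cast ∘ x) := by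
    ext i
    simpa [← transpose_map] using (Int.castRingHom ℝ).map_mulVec Aᵀ x i
  change (Int.cast ∘ (Aᵀ *ᵥ x) : R3) ⬝ᵥ u = (Int.cast ∘ x : R3) ⬝ᵥ _
  rw [hcast, dotProduct_mulVec, mulVec_transpose]

lemma dot3_inv_transpose_mulVec {A : Matrix (Fin 3) (Fin 3) ℤ} (hA : IsUnit A.det) (x : Z3)
    (u : R3) : dot3 (Aᵀ⁻¹ *ᵥ x) (A.map (Int.cast : ℤ → ℝ) *ᵥ u) = dot3 x u := by
  rw [← dot3_transpose_mulVec, mulVec_mulVec, mul_nonsing_inv _ (isUnit_det_transpose A hA),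
    one_mulVec]

lemma mem_Plane {v : R3} {ω : ℝ} {x : Z3} : x ∈ Plane v ω ↔ 0 ≤ dot3 x v ∧ dot3 x v < ω :=
  Iff.rfl

lemma adj3_symm {x y : Z3} (h : adj3 x y) : adj3 y x := by
  simpa only [adj3, abs_sub_comm] using h

lemma adj3_add_single (x : Z3) (i : Fin 3) {δ : ℤ} (hδ : |δ| = 1) :
    adj3 x (x + Pi.single i δ) := by
  simp only [adj3, Pi.add_apply, sub_add_cancel_left, abs_neg, Fin.sum_univ_three]
  fin_cases i <;> simp [hδ]

lemma exists_eq_add_single_of_adj3 {x y : Z3} (h : adj3 x y) :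
    ∃ i, y = x + Pi.single i 1 ∨ x = y + Pi.single i 1 := by
  rw [adj3, Fin.sum_univ_three, Int.abs_eq_natAbs, Int.abs_eq_natAbs, Int.abs_eq_natAbs] at h
  have : (x 0 - y 0 = -1 ∨ x 0 - y 0 = 1) ∧ x 1 = y 1 ∧ x 2 = y 2 ∨
      (x 1 - y 1 = -1 ∨ x 1 - y 1 = 1) ∧ x 0 = y 0 ∧ x 2 = y 2 ∨
      (x 2 - y 2 = -1 ∨ x 2 - y 2 = 1) ∧ x 0 = y 0 ∧ x 1 = y 1 := by
    omega
  rcases this with ⟨h0 | h0, h1, h2⟩ | ⟨h1 | h1, h0, h2⟩ | ⟨h2 | h2, h0, h1⟩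
    <;> [refine ⟨0, .inl ?_⟩; refine ⟨0, .inr ?_⟩; refine ⟨1, .inl ?_⟩; refine ⟨1, .inr ?_⟩;
      refine ⟨2, .inl ?_⟩; refine ⟨2, .inr ?_⟩]
  all_goals
    ext j
    fin_cases j <;>
      simp only [Fin.zero_eta, Fin.mk_one, Fin.reduceFinMk, Fin.isValue, Pi.add_apply, ne_eq,
        Pi.single_eq_same, Pi.single_eq_of_ne, Fin.reduceEq, not_false_eq_true, add_zero] <;>
      omega

/-- Unlike the relation in `Connected3`, this one is symmetric. -/
def AdjIn (A : Set Z3) (x y : Z3) : Prop := x ∈ A ∧ y ∈ A ∧ adj3 x y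

instance (A : Set Z3) : Std.Symm (AdjIn A) :=
  ⟨fun _ _ ⟨hx, hy, h⟩ => ⟨hy, hx, adj3_symm h⟩⟩

lemma reflTransGen_adjIn_of_connected3 {A : Set Z3} {x y : Z3} (hx : x ∈ A)
    (h : Relation.ReflTransGen (fun a b => b ∈ A ∧ adj3 a b) x y) :
    Relation.ReflTransGen (AdjIn A) x y := by
  induction h with
  | refl => exact .refl
  | @tail b c hxb hbc ih =>
    have hb : b ∈ A := by
      rcases hxb.cases_tail with rfl | ⟨_, _, hb⟩
      exacts [hx, hb.1]
    exact ih.tail ⟨hb, hbc⟩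

lemma connected3_iff {A : Set Z3} :
    Connected3 A ↔ A.Nonempty ∧ ∀ x ∈ A, ∀ y ∈ A, Relation.ReflTransGen (AdjIn A) x y :=
  and_congr_right fun _ => forall₂_congr fun _ hx => forall₂_congr fun _ _ =>
    ⟨reflTransGen_adjIn_of_connected3 hx,
      Relation.ReflTransGen.mono (fun a b (h : AdjIn A a b) => h.2) _ _⟩

lemma FS_cases (w : R3) :
    FSidx w = 0 ∧ FS w = ![w 0, w 1 - w 0, w 2 - w 0] ∨
    FSidx w = 1 ∧ FS w = ![w 1 - w 0, w 0, w 2 - w 0] ∨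
    FSidx w = 2 ∧ FS w = ![w 1 - w 0, w 2 - w 0, w 0] := by
  unfold FS FSidx
  split_ifs <;> simp

lemma FS_FSidx (w : R3) : FS w (FSidx w) = w 0 := by
  rcases FS_cases w with ⟨hi, hF⟩ | ⟨hi, hF⟩ | ⟨hi, hF⟩ <;> simp [hi, hF]

lemma sum_FS (w : R3) : ∑ i, FS w i = ∑ i, w i - 2 * w 0 := by
  rcases FS_cases w with ⟨-, hF⟩ | ⟨-, hF⟩ | ⟨-, hF⟩ <;>
    simp only [hF, Fin.sum_univ_three, cons_val_zero, cons_val_one, cons_val_two,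
      Nat.succ_eq_add_one, Nat.reduceAdd, tail_cons, head_cons] <;>
    ring

lemma Mmat_mulVec_FS (w : R3) : (Mmat (FSidx w)).map (Int.cast : ℤ → ℝ) *ᵥ FS w = w := by
  ext i
  rcases FS_cases w with ⟨hi, hF⟩ | ⟨hi, hF⟩ | ⟨hi, hF⟩ <;>
    fin_cases i <;> simp [hi, hF, Mmat, mulVec, dotProduct, Fin.sum_univ_three]

lemma isUnit_det_Mmat (j : Fin 3) : IsUnit (Mmat j).det := by
  rw [Int.isUnit_iff]
  fin_cases j <;> simp [Mmat, det_fin_three]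

lemma FS_mem_O3 {w : R3} (hw : w ∈ O3) : FS w ∈ O3 := by
  obtain ⟨h0, h1, h2⟩ := hw
  unfold FS
  split_ifs with hA hB <;> simp only [O3, Set.mem_ofPred_eq, cons_val_zero, cons_val_one,
    cons_val_two, Nat.succ_eq_add_one, Nat.reduceAdd, tail_cons, head_cons]
  · exact ⟨h0, hA⟩
  · exact ⟨by linarith, hB.1.le, hB.2⟩
  · have h10 : w 1 - w 0 < w 0 := by by_contra! h; exact hA ⟨h, by linarith⟩
    have h20 : w 2 - w 0 < w 0 := by by_contra! h; exact hB ⟨h10, h⟩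
    exact ⟨by linarith, by linarith, h20.le⟩

lemma nonneg_of_mem_O3 {w : R3} (hw : w ∈ O3) : ∀ i, 0 ≤ w i
  | 0 => hw.1
  | 1 => hw.1.trans hw.2.1
  | 2 => hw.1.trans (hw.2.1.trans hw.2.2)

lemma apply_zero_le_of_mem_O3 {w : R3} (hw : w ∈ O3) : ∀ i, w 0 ≤ w i
  | 0 => le_rfl
  | 1 => hw.2.1
  | 2 => hw.2.1.trans hw.2.2

lemma iterate_FS_mem_O3 {v : R3} (hv : v ∈ O3) (n : ℕ) : FS^[n] v ∈ O3 := by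
  induction n with
  | zero => exact hv
  | succ n ih => rw [Function.iterate_succ_apply']; exact FS_mem_O3 ih

lemma iterate_FS_mem_F3set {v : R3} (hv : v ∈ F3set) (n : ℕ) : FS^[n] v ∈ F3set :=
  ⟨iterate_FS_mem_O3 hv.1 n, fun m => by rw [← Function.iterate_add_apply]; exact hv.2 _⟩

lemma pos_of_mem_F3set {w : R3} (hw : w ∈ F3set) : 0 < w 0 := by
  obtain ⟨⟨h0, h1, h2⟩, htri⟩ := hw
  have := htri 0
  simp only [Function.iterate_zero_apply] at this
  contrapose! h1
  linarith

lemma sum_iterate_FS (v : R3) (m : ℕ) :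
    ∑ i, (FS^[m] v) i = ∑ i, v i - 2 * ∑ i ∈ Finset.range m, (FS^[i] v) 0 := by
  induction m with
  | zero => simp
  | succ m ih => rw [Function.iterate_succ_apply', sum_FS, ih, Finset.sum_range_succ]; ring

lemma summable_iterate_FS_zero {v : R3} (hv : v ∈ O3) : Summable fun i => (FS^[i] v) 0 := by
  refine summable_of_sum_range_le (c := (∑ i, v i) / 2)
    (fun n => nonneg_of_mem_O3 (iterate_FS_mem_O3 hv n) 0) fun m => ?_
  have hsum := sum_iterate_FS v m
  have hnonneg : 0 ≤ ∑ i, (FS^[m] v) i :=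
    Finset.sum_nonneg fun i _ => nonneg_of_mem_O3 (iterate_FS_mem_O3 hv m) i
  linarith

lemma prodM_succ (v : R3) (n : ℕ) :
    prodM v (n + 1) = prodM v n * Mmat (FSidx (FS^[n] v)) := by
  simp [prodM, List.range_succ]

lemma isUnit_det_prodM (v : R3) (n : ℕ) : IsUnit (prodM v n).det :=
  (isUnit_iff_isUnit_det _).1 <| List.prod_isUnit <| by
    simpa using fun j _ => (isUnit_iff_isUnit_det _).2 (isUnit_det_Mmat _)

lemma prodM_mulVec_iterate_FS (v : R3) (n : ℕ) :
    (prodM v n).map (Int.cast : ℤ → ℝ) *ᵥ FS^[n] v = v := by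
  induction n with
  | zero => simp [prodM]
  | succ n ih =>
    have hmul : (prodM v n * Mmat (FSidx (FS^[n] v))).map (Int.cast : ℤ → ℝ) =
        (prodM v n).map Int.cast * (Mmat (FSidx (FS^[n] v))).map Int.cast :=
      Matrix.map_mul (f := Int.castRingHom ℝ)
    rw [prodM_succ, Function.iterate_succ_apply', hmul, ← mulVec_mulVec, Mmat_mulVec_FS, ih]

lemma dot3_transVec (v : R3) (n : ℕ) : dot3 (transVec v n) v = (FS^[n] v) 0 := by
  calc dot3 (transVec v n) v
      = dot3 ((prodM v n)ᵀ⁻¹ *ᵥ e1) ((prodM v n).map Int.cast *ᵥ FS^[n] v) := by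
        rw [prodM_mulVec_iterate_FS]; rfl
    _ = (FS^[n] v) 0 := by rw [dot3_inv_transpose_mulVec (isUnit_det_prodM v n), dot3_e1]

lemma dot3_mem_Icc_of_mem_Tseq {v : R3} (hv : v ∈ O3) {n : ℕ} {x : Z3} (hx : x ∈ Tseq v n) :
    dot3 x v ∈ Set.Icc 0 (∑ i ∈ Finset.range n, (FS^[i] v) 0) := by
  induction n generalizing x with
  | zero => simp_all [Tseq, dot3_zero]
  | succ n ih =>
    have hn := nonneg_of_mem_O3 (iterate_FS_mem_O3 hv n) 0
    rw [Finset.sum_range_succ]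
    rcases hx with hx | ⟨y, hy, rfl⟩
    · exact ⟨(ih hx).1, by linarith [(ih hx).2]⟩
    · rw [dot3_add, dot3_transVec]
      exact ⟨by linarith [(ih hy).1], by linarith [(ih hy).2]⟩

lemma sum_natAbs_add_single_lt (x : Z3) (i : Fin 3) {δ : ℤ}
    (h : (x i + δ).natAbs < (x i).natAbs) :
    ∑ j, ((x + Pi.single i δ : Z3) j).natAbs < ∑ j, (x j).natAbs := by
  refine Finset.sum_lt_sum (fun j _ => ?_) ⟨i, Finset.mem_univ i, by simpa using h⟩
  rcases eq_or_ne j i with rfl | hj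
  · simpa using h.le
  · simp [hj]

/-- Step down along a positive coordinate `i` if `vᵢ ≤ ⟨x, v⟩`, and otherwise up along a negative
coordinate. -/
lemma exists_step_toward_zero {v : R3} (hv : ∀ i, 0 ≤ v i) {x : Z3}
    (hx : x ∈ Plane v (∑ i, v i)) (hx0 : x ≠ 0) :
    ∃ i, ∃ δ : ℤ, |δ| = 1 ∧ x + Pi.single i δ ∈ Plane v (∑ i, v i) ∧
      (x i + δ).natAbs < (x i).natAbs := by
  obtain ⟨hx_nonneg, hx_lt⟩ := hx
  have hstep (i : Fin 3) (δ : ℤ) : dot3 (x + Pi.single i δ) v = dot3 x v + δ * v i := by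
    rw [dot3_add, dot3_single]
  by_cases hdown : ∃ i, 0 < x i ∧ v i ≤ dot3 x v
  · obtain ⟨i, hi, hvi⟩ := hdown
    refine ⟨i, -1, by norm_num, ?_, by omega⟩
    rw [mem_Plane, hstep]
    push_cast
    constructor <;> linarith [hv i]
  push Not at hdown
  obtain ⟨j, hj⟩ : ∃ j, x j < 0 := by
    by_contra! hnonneg
    obtain ⟨i, hi⟩ := Function.ne_iff.1 hx0
    have hi' : 0 < x i := lt_of_le_of_ne (hnonneg i) (Ne.symm hi)
    have hvi : v i ≤ dot3 x v := calc
      v i ≤ x i * v i := le_mul_of_one_le_left (hv i) (by exact_mod_cast hi')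
      _ ≤ dot3 x v := Finset.single_le_sum (f := fun k => (x k : ℝ) * v k)
        (fun k _ => mul_nonneg (by exact_mod_cast hnonneg k) (hv k)) (Finset.mem_univ i)
    linarith [hdown i hi']
  refine ⟨j, 1, by norm_num, ?_, by omega⟩
  rw [mem_Plane, hstep]
  push_cast
  refine ⟨by linarith [hv j], ?_⟩
  by_cases hpos : ∃ i, 0 < x i
  · obtain ⟨i, hi⟩ := hpos
    have hij : i ≠ j := by rintro rfl; omega
    linarith [hdown i hi, Finset.add_le_sum (fun k _ => hv k) (Finset.mem_univ i)
      (Finset.mem_univ j) hij]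
  · push Not at hpos
    have hsplit : dot3 x v = x j * v j + ∑ k ∈ Finset.univ.erase j, (x k : ℝ) * v k :=
      (Finset.add_sum_erase _ _ (Finset.mem_univ j)).symm
    have hrest : ∑ k ∈ Finset.univ.erase j, (x k : ℝ) * v k ≤ 0 :=
      Finset.sum_nonpos fun k _ => mul_nonpos_of_nonpos_of_nonneg (by exact_mod_cast hpos k) (hv k)
    have hxj : (x j : ℝ) ≤ -1 := by exact_mod_cast (by omega : x j ≤ -1)
    nlinarith [hv j]

lemma reflTransGen_adjIn_plane_sum_zero {v : R3} (hv : ∀ i, 0 ≤ v i) {x : Z3}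
    (hx : x ∈ Plane v (∑ i, v i)) : Relation.ReflTransGen (AdjIn (Plane v (∑ i, v i))) x 0 := by
  by_cases hx0 : x = 0
  · rw [hx0]
  obtain ⟨i, δ, hδ, hy, hlt⟩ := exists_step_toward_zero hv hx hx0
  exact .head ⟨hx, hy, adj3_add_single x i hδ⟩ (reflTransGen_adjIn_plane_sum_zero hv hy)
termination_by ∑ i, (x i).natAbs
decreasing_by exact sum_natAbs_add_single_lt x i hlt

lemma connected3_plane_sum {v : R3} (hv : ∀ i, 0 ≤ v i) (hpos : 0 < ∑ i, v i) :
    Connected3 (Plane v (∑ i, v i)) := by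
  have h0 : (0 : Z3) ∈ Plane v (∑ i, v i) := ⟨(dot3_zero v).ge, by rwa [dot3_zero]⟩
  refine connected3_iff.2 ⟨⟨0, h0⟩, fun x hx y hy => ?_⟩
  exact (reflTransGen_adjIn_plane_sum_zero hv hx).trans
    (Std.Symm.symm _ _ (reflTransGen_adjIn_plane_sum_zero hv hy))

def foldDown (w : R3) (k : Fin 3) (ω : ℝ) (y : Z3) : Z3 :=
  if dot3 y w < ω - w k then y else y - Pi.single k 1

lemma foldDown_of_lt {w : R3} {k : Fin 3} {ω : ℝ} {y : Z3} (h : dot3 y w < ω - w k) :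
    foldDown w k ω y = y :=
  if_pos h

lemma reflTransGen_foldDown {w : R3} (hw : ∀ i, 0 ≤ w i) {k : Fin 3} {ω : ℝ} {y u : Z3}
    (hu : u = 0 ∨ ∃ c, u = Pi.single c 1) (hy : 0 ≤ dot3 y w)
    (hyu : dot3 (y + u + Pi.single k 1) w < ω) :
    Relation.ReflTransGen (AdjIn (Plane w (ω - w k)))
      (foldDown w k ω y) (foldDown w k ω (y + u + Pi.single k 1)) := by
  have hu0 : 0 ≤ dot3 u w := by
    rcases hu with rfl | ⟨c, rfl⟩
    · exact (dot3_zero w).ge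
    · simpa [dot3_single] using hw c
  rw [dot3_add, dot3_single_one] at hyu
  have hmid : y + u ∈ Plane w (ω - w k) := by
    rw [mem_Plane, dot3_add] at *
    constructor <;> linarith
  have hylow : y ∈ Plane w (ω - w k) := ⟨hy, by linarith [hmid.2, dot3_add y u w]⟩
  have hpath : Relation.ReflTransGen (AdjIn (Plane w (ω - w k))) y (y + u) := by
    rcases hu with rfl | ⟨c, rfl⟩
    · rw [add_zero]
    · exact .single ⟨hylow, hmid, adj3_add_single y c (by norm_num)⟩
  rw [foldDown_of_lt hylow.2, foldDown]
  split_ifs with htop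
  · refine hpath.tail ⟨hmid, ⟨?_, htop⟩, adj3_add_single _ k (by norm_num)⟩
    rw [dot3_add, dot3_single_one]
    linarith [hmid.1, hw k]
  · rwa [add_sub_cancel_right]

lemma Mmat_row (j i : Fin 3) :
    Mmat j i - Pi.single j 1 = 0 ∨ ∃ c, Mmat j i - Pi.single j 1 = Pi.single c 1 := by
  fin_cases j <;> fin_cases i <;> decide

lemma dot3_Mmat_transpose_mulVec (w : R3) (x : Z3) :
    dot3 ((Mmat (FSidx w))ᵀ *ᵥ x) (FS w) = dot3 x w := by
  rw [dot3_transpose_mulVec, Mmat_mulVec_FS]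

lemma reflTransGen_foldDown_Mmat {w : R3} (hw : w ∈ O3) {ω : ℝ} {x : Z3} {i : Fin 3}
    (hx : x ∈ Plane w ω) (hxi : x + Pi.single i 1 ∈ Plane w ω) :
    Relation.ReflTransGen (AdjIn (Plane (FS w) (ω - w 0)))
      (foldDown (FS w) (FSidx w) ω ((Mmat (FSidx w))ᵀ *ᵥ x))
      (foldDown (FS w) (FSidx w) ω ((Mmat (FSidx w))ᵀ *ᵥ (x + Pi.single i 1))) := by
  set k := FSidx w
  have hrow : (Mmat k)ᵀ *ᵥ (x + Pi.single i 1) =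
      (Mmat k)ᵀ *ᵥ x + (Mmat k i - Pi.single k 1) + Pi.single k 1 := by
    rw [mulVec_add, mulVec_single_one, col_transpose, add_assoc, sub_add_cancel]
    rfl
  rw [← FS_FSidx w, hrow]
  refine reflTransGen_foldDown (nonneg_of_mem_O3 (FS_mem_O3 hw)) (Mmat_row k i) ?_ ?_
  · rw [dot3_Mmat_transpose_mulVec]
    exact hx.1
  · rw [← hrow, dot3_Mmat_transpose_mulVec]
    exact hxi.2

theorem connected3_plane_FS {w : R3} (hw : w ∈ O3) {ω : ℝ} (hω : w 0 < ω)
    (hc : Connected3 (Plane w ω)) : Connected3 (Plane (FS w) (ω - w 0)) := by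
  set M := Mmat (FSidx w)
  set f : Z3 → Z3 := fun x => foldDown (FS w) (FSidx w) ω (Mᵀ *ᵥ x)
  have hedge (x x' : Z3) (h : AdjIn (Plane w ω) x x') :
      Relation.ReflTransGen (AdjIn (Plane (FS w) (ω - w 0))) (f x) (f x') := by
    obtain ⟨hx, hx', hadj⟩ := h
    obtain ⟨i, rfl | rfl⟩ := exists_eq_add_single_of_adj3 hadj
    exacts [reflTransGen_foldDown_Mmat hw hx hx',
      Std.Symm.symm _ _ (reflTransGen_foldDown_Mmat hw hx' hx)]
  have hinv (a : Z3) : Mᵀ *ᵥ (Mᵀ⁻¹ *ᵥ a) = a := by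
    rw [mulVec_mulVec, mul_nonsing_inv _ (isUnit_det_transpose _ (isUnit_det_Mmat _)), one_mulVec]
  have hmem (a : Z3) (ha : a ∈ Plane (FS w) (ω - w 0)) : Mᵀ⁻¹ *ᵥ a ∈ Plane w ω := by
    rw [mem_Plane, ← dot3_Mmat_transpose_mulVec, hinv]
    exact ⟨ha.1, by linarith [ha.2, nonneg_of_mem_O3 hw 0]⟩
  have hfold (a : Z3) (ha : a ∈ Plane (FS w) (ω - w 0)) : f (Mᵀ⁻¹ *ᵥ a) = a := by
    simp only [f, hinv]
    exact foldDown_of_lt (by rw [FS_FSidx]; exact ha.2)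
  rw [connected3_iff] at hc ⊢
  refine ⟨⟨0, by rw [mem_Plane, dot3_zero]; exact ⟨le_rfl, by linarith⟩⟩, fun a ha b hb => ?_⟩
  simpa only [Function.onFun, hfold a ha, hfold b hb] using
    Relation.ReflTransGen.lift' f hedge _ _ (hc.2 _ (hmem a ha) _ (hmem b hb))

/-- The values `(FS^[m] v) 0 = ⟨transVec v m, v⟩` are positive and summable, hence some of them
fall below any `ω > 0`. -/
lemma exists_mem_plane_ne_zero {v : R3} (hv : v ∈ F3set) {ω : ℝ} (hω : 0 < ω) :
    ∃ p ∈ Plane v ω, p ≠ 0 := by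
  obtain ⟨m, hm⟩ :=
    ((summable_iterate_FS_zero hv.1).tendsto_atTop_zero.eventually (gt_mem_nhds hω)).exists
  have hpos := pos_of_mem_F3set (iterate_FS_mem_F3set hv m)
  refine ⟨transVec v m, by rw [mem_Plane, dot3_transVec]; exact ⟨hpos.le, hm⟩, fun h => ?_⟩
  have := dot3_transVec v m
  rw [h, dot3_zero] at this
  linarith

lemma apply_zero_lt_of_connected3_plane {w : R3} (hw : w ∈ O3) (hw0 : 0 < w 0) {ω : ℝ} {p : Z3}
    (hp : p ∈ Plane w ω) (hp0 : p ≠ 0) (hc : Connected3 (Plane w ω)) : w 0 < ω := by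
  have h0 : (0 : Z3) ∈ Plane w ω := by
    rw [mem_Plane, dot3_zero]
    exact ⟨le_rfl, hp.1.trans_lt hp.2⟩
  rcases (hc.2 0 h0 p hp).cases_head with h | ⟨q, ⟨hq, hadj⟩, -⟩
  · exact absurd h.symm hp0
  obtain ⟨i, rfl | hq0⟩ := exists_eq_add_single_of_adj3 hadj
  · have := hq.2
    rw [zero_add, dot3_single_one] at this
    linarith [apply_zero_le_of_mem_O3 hw i]
  · have := congrArg (dot3 · w) hq0
    simp only [dot3_zero, dot3_add, dot3_single_one] at this
    linarith [hq.1, apply_zero_le_of_mem_O3 hw i]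

lemma apply_zero_lt_of_connected3_plane_of_mem_F3set {w : R3} (hw : w ∈ F3set) {ω : ℝ}
    (hc : Connected3 (Plane w ω)) : w 0 < ω := by
  obtain ⟨x, hx⟩ := hc.1
  obtain ⟨p, hp, hp0⟩ := exists_mem_plane_ne_zero hw (hx.1.trans_lt hx.2)
  exact apply_zero_lt_of_connected3_plane hw.1 (pos_of_mem_F3set hw) hp hp0 hc

lemma sum_lt_of_connected3_plane {w : R3} (hw : w ∈ F3set) (m : ℕ) {ω : ℝ}
    (hc : Connected3 (Plane w ω)) : ∑ i ∈ Finset.range m, (FS^[i] w) 0 < ω := by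
  induction m generalizing w ω with
  | zero =>
    obtain ⟨⟨x, hx⟩, -⟩ := hc
    simpa using hx.1.trans_lt hx.2
  | succ m ih =>
    have hω := apply_zero_lt_of_connected3_plane_of_mem_F3set hw hc
    have := ih (iterate_FS_mem_F3set hw 1) (connected3_plane_FS hw.1 hω hc)
    rw [Finset.sum_range_succ']
    simp only [Function.iterate_succ_apply, Function.iterate_zero_apply] at this ⊢
    linarith

lemma sum_le_omegaConn {v : R3} (hv : v ∈ F3set) (m : ℕ) :
    ∑ i ∈ Finset.range m, (FS^[i] v) 0 ≤ omegaConn v := by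
  have hv0 := nonneg_of_mem_O3 hv.1
  have hpos : 0 < ∑ i, v i :=
    (pos_of_mem_F3set hv).trans_le (Finset.single_le_sum (fun i _ => hv0 i) (Finset.mem_univ 0))
  exact le_csInf ⟨_, hpos.le, connected3_plane_sum hv0 hpos⟩
    fun ω ⟨_, hc⟩ => (sum_lt_of_connected3_plane hv m hc).le

/-- For `v ∈ F₃`, every `x ∈ Tₙ` satisfies
`0 ≤ ⟨x,v⟩ < Σ_{i=0}^{n} v₁⁽ⁱ⁾`; consequently `⋃ₙ Tₙ ⊆ P(v, Ω(v))`. -/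
theorem Tseq_subset_plane (v : R3) (hv : v ∈ F3set) :
    (∀ n : ℕ, ∀ x ∈ Tseq v n,
      0 ≤ dot3 x v ∧ dot3 x v < ∑ i ∈ Finset.range (n + 1), (FS^[i] v) 0) ∧
    (⋃ n : ℕ, Tseq v n) ⊆ Plane v (omegaConn v) := by
  have hbound (n : ℕ) (x : Z3) (hx : x ∈ Tseq v n) :
      0 ≤ dot3 x v ∧ dot3 x v < ∑ i ∈ Finset.range (n + 1), (FS^[i] v) 0 := by
    obtain ⟨h0, hle⟩ := dot3_mem_Icc_of_mem_Tseq hv.1 hx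
    rw [Finset.sum_range_succ]
    exact ⟨h0, by linarith [pos_of_mem_F3set (iterate_FS_mem_F3set hv n)]⟩
  refine ⟨hbound, fun x hx => ?_⟩
  obtain ⟨n, hx⟩ := Set.mem_iUnion.1 hx
  obtain ⟨h0, hlt⟩ := hbound n x hx
  exact ⟨h0, hlt.trans_le (sum_le_omegaConn hv (n + 1))⟩
end
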